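/- arXiv:2111.02698 — 5 statements merged into one kernel-verified Lean document; each statement's English description precedes it below -/
import Mathlib

section
/- If A is an N×N lower Hessenberg-type (p+2)-banded matrix (entries a_{i,j} = 0 when j > i+1 or i > j+p) with all subdiagonal band entries a_{i+p,i} ≠ 0 for i = 0,…,N-p-1, and A admits a factorization A = L·U with L unit lower triangular and U upper triangular with nonzero diagonal, then L is (p+1)-banded (l_{i,j} = 0 for i > j+p) and U is upper bidiagonal (u_{i,j} = 0 for j > i+1 and j < i). -/
/-!
Since `U` is upper triangular, `a_{ij} = l_{ij} u_{jj} + ∑_{k<j} l_{ik} u_{kj}`,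
so by induction on the column `j` the lower band of `A` is inherited by `L` once `U` has a nonzero diagonal.
Transposing `A = L * U` to `Aᵀ = Uᵀ * Lᵀ` turns the upper band of `A` into a lower band,
and the same argument shows that `U` inherits it.
-/

open Matrix

theorem Matrix.mul_lowerBand_left_factor {R : Type*} [Semiring R] [NoZeroDivisors R] {N p : ℕ}
    {L U : Matrix (Fin N) (Fin N) R} (hU : ∀ i j : Fin N, j < i → U i j = 0)
    (hUdiag : ∀ i, U i i ≠ 0) (hband : ∀ i j : Fin N, (j : ℕ) + p < i → (L * U) i j = 0)
    (i j : Fin N) (hij : (j : ℕ) + p < i) : L i j = 0 := by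
  induction j using WellFoundedLT.induction generalizing i with
  | _ j ih =>
  have hdiag : (L * U) i j = L i j * U j j := by
    rw [mul_apply]
    refine Finset.sum_eq_single j (fun k _ hkj => ?_) (by simp)
    rcases lt_or_gt_of_ne hkj with hk | hk
    · rw [ih k hk i (by omega), zero_mul]
    · rw [hU k j hk, mul_zero]
  exact (mul_eq_zero.mp (hdiag ▸ hband i j hij)).resolve_right (hUdiag j)

theorem stmt0_general {F : Type*} [Field F] {N p : ℕ}
    (A L U : Matrix (Fin N) (Fin N) F)
    (hHess : ∀ i j : Fin N, (j : ℕ) > (i : ℕ) + 1 → A i j = 0)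
    (hBand : ∀ i j : Fin N, (i : ℕ) > (j : ℕ) + p → A i j = 0)
    (hLU : A = L * U)
    (hLdiag : ∀ i : Fin N, L i i = 1)
    (hLlow : ∀ i j : Fin N, (j : ℕ) > (i : ℕ) → L i j = 0)
    (hUup : ∀ i j : Fin N, (i : ℕ) > (j : ℕ) → U i j = 0)
    (hUdiag : ∀ i : Fin N, U i i ≠ 0) :
    (∀ i j : Fin N, (i : ℕ) > (j : ℕ) + p → L i j = 0) ∧
    (∀ i j : Fin N, (j : ℕ) > (i : ℕ) + 1 → U i j = 0) := by
  subst hLU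
  refine ⟨mul_lowerBand_left_factor hUup hUdiag hBand, fun i j hij => ?_⟩
  have hUt : ∀ i j : Fin N, (j : ℕ) + 1 < i → Uᵀ i j = 0 :=
    mul_lowerBand_left_factor (L := Uᵀ) (U := Lᵀ) (fun i j h => hLlow j i h)
      (fun i => by simp [hLdiag]) (fun i j h => by rw [← transpose_mul]; exact hHess j i h)
  exact hUt j i hij

/-- If `A` is an `N×N` lower Hessenberg-type `(p+2)`-banded matrix
(`A i j = 0` when `j > i+1` or `i > j+p`) with all subdiagonal band entries
`a_{i+p,i} ≠ 0`, and `A = L * U` with `L` unit lower triangular and `U` upper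
triangular with nonzero diagonal, then `L` is `(p+1)`-banded and `U` is upper
bidiagonal. -/
theorem stmt0 {F : Type*} [Field F] {N p : ℕ}
    (A L U : Matrix (Fin N) (Fin N) F)
    (hHess : ∀ i j : Fin N, (j : ℕ) > (i : ℕ) + 1 → A i j = 0)
    (hBand : ∀ i j : Fin N, (i : ℕ) > (j : ℕ) + p → A i j = 0)
    (hSub : ∀ i j : Fin N, (i : ℕ) = (j : ℕ) + p → A i j ≠ 0)
    (hLU : A = L * U)
    (hLdiag : ∀ i : Fin N, L i i = 1)
    (hLlow : ∀ i j : Fin N, (j : ℕ) > (i : ℕ) → L i j = 0)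
    (hUup : ∀ i j : Fin N, (i : ℕ) > (j : ℕ) → U i j = 0)
    (hUdiag : ∀ i : Fin N, U i i ≠ 0) :
    (∀ i j : Fin N, (i : ℕ) > (j : ℕ) + p → L i j = 0) ∧
    (∀ i j : Fin N, (j : ℕ) > (i : ℕ) + 1 → U i j = 0) :=
  stmt0_general A L U hHess hBand hLU hLdiag hLlow hUup hUdiag
end

section
/- If moreover each of the p lower unit bidiagonal matrices L^{(i)} has all its subdiagonal entries nonzero, then the product L = L^{(1)}⋯L^{(p)} satisfies l_{i+p,i} ≠ 0 for all valid i; in fact l_{m,m-p} equals the product γ^{(1)}_{m-1}·γ^{(2)}_{m-2}⋯γ^{(p)}_{m-p} of one subdiagonal entry from each factor. -/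
/-!
An entry of a product of matrices with lower bandwidth `a` and `b` that lies on the outermost
subdiagonal `i = j + a + b` receives a contribution from a single term of the matrix product,
namely the one passing through the outermost subdiagonals of both factors. Iterating this over
`p` bidiagonal factors, `l_{m,m-p}` is the product of one subdiagonal entry from each factor, and
it is nonzero when all of them are.
-/

namespace Matrix

variable {R : Type*} {N : ℕ}

def IsLowerBanded [Zero R] (A : Matrix (Fin N) (Fin N) R) (b : ℕ) : Prop :=
  ∀ i j : Fin N, (j : ℕ) + b < i → A i j = 0

theorem isLowerBanded_one [Zero R] [One R] : IsLowerBanded (1 : Matrix (Fin N) (Fin N) R) 0 :=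
  fun _ _ hij => one_apply_ne (by rintro rfl; omega)

section NonUnital

variable [NonUnitalNonAssocSemiring R] {A B : Matrix (Fin N) (Fin N) R} {a b : ℕ}

theorem IsLowerBanded.mul (hA : A.IsLowerBanded a) (hB : B.IsLowerBanded b) :
    (A * B).IsLowerBanded (a + b) := by
  intro i j hij
  rw [mul_apply]
  refine Finset.sum_eq_zero fun k _ => ?_
  by_cases hk : (k : ℕ) + a < i
  · rw [hA i k hk, zero_mul]
  · rw [hB k j (by omega), mul_zero]

theorem IsLowerBanded.mul_apply_of_eq_add (hA : A.IsLowerBanded a) (hB : B.IsLowerBanded b)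
    {i j k : Fin N} (hik : (i : ℕ) = k + a) (hkj : (k : ℕ) = j + b) :
    (A * B) i j = A i k * B k j := by
  rw [mul_apply]
  refine Finset.sum_eq_single k (fun l _ hlk => ?_) (absurd (Finset.mem_univ k))
  by_cases hl : (l : ℕ) < k
  · rw [hA i l (by omega), zero_mul]
  · rw [hB l j (by have := Fin.val_ne_of_ne hlk; omega), mul_zero]

end NonUnital

theorem isLowerBanded_prod_ofFn [Semiring R] {p : ℕ} {M : Fin p → Matrix (Fin N) (Fin N) R}
    (hM : ∀ k, (M k).IsLowerBanded 1) : (List.ofFn M).prod.IsLowerBanded p := by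
  induction p with
  | zero => exact isLowerBanded_one
  | succ p ih =>
    rw [List.ofFn_succ, List.prod_cons]
    simpa only [add_comm] using (hM 0).mul (ih fun k => hM k.succ)

theorem prod_ofFn_apply_of_eq_add [CommSemiring R] {p : ℕ} {M : Fin p → Matrix (Fin N) (Fin N) R}
    (g : Fin p → ℕ → R) (hM : ∀ k, (M k).IsLowerBanded 1)
    (hg : ∀ k (i j : Fin N), (i : ℕ) = j + 1 → M k i j = g k j)
    {i j : Fin N} (hij : (i : ℕ) = j + p) :
    (List.ofFn M).prod i j = ∏ k : Fin p, g k (i - (k + 1)) := by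
  induction p generalizing i with
  | zero => simp [show i = j from Fin.ext hij]
  | succ p ih =>
    let i' : Fin N := ⟨i - 1, by omega⟩
    have hi' : (i : ℕ) = i' + 1 := by simp only [i']; omega
    rw [List.ofFn_succ, List.prod_cons,
      (hM 0).mul_apply_of_eq_add (isLowerBanded_prod_ofFn fun k => hM k.succ) hi'
        (by simp only [i']; omega),
      hg 0 i i' hi', ih (fun k => g k.succ) (fun k => hM k.succ) (fun k => hg k.succ)
        (by simp only [i']; omega), Fin.prod_univ_succ]
    congr 1
    refine Finset.prod_congr rfl fun k _ => congrArg _ ?_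
    simp only [i', Fin.val_succ]
    omega

end Matrix

/-- If each of the `p` lower unit bidiagonal matrices `L⁽ⁱ⁾` (with
subdiagonal entries `γ⁽ⁱ⁾ₖ` at position `(k+1,k)`) has all its subdiagonal
entries nonzero, then the product `L = L⁽¹⁾⋯L⁽ᵖ⁾` satisfies `l_{i+p,i} ≠ 0`;
in fact `l_{m,m-p} = γ⁽¹⁾_{m-1}·γ⁽²⁾_{m-2}⋯γ⁽ᵖ⁾_{m-p}`. -/
theorem stmt3 {F : Type*} [Field F] {N p : ℕ}
    (γ : Fin p → ℕ → F)
    (hγ : ∀ (k : Fin p) (n : ℕ), γ k n ≠ 0)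
    (L : Fin p → Matrix (Fin N) (Fin N) F)
    (hL : ∀ (k : Fin p) (i j : Fin N), L k i j =
      if (i : ℕ) = (j : ℕ) then 1
      else if (i : ℕ) = (j : ℕ) + 1 then γ k (j : ℕ) else 0) :
    ∀ i j : Fin N, (i : ℕ) = (j : ℕ) + p →
      ((List.ofFn L).prod i j = ∏ k : Fin p, γ k ((i : ℕ) - ((k : ℕ) + 1)) ∧
       (List.ofFn L).prod i j ≠ 0) := by
  intro i j hij
  have hband : ∀ k, (L k).IsLowerBanded 1 := fun k a b hab => by
    rw [hL, if_neg (by omega), if_neg (by omega)]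
  have hsub : ∀ k (a b : Fin N), (a : ℕ) = b + 1 → L k a b = γ k b := fun k a b hab => by
    rw [hL, if_neg (by omega), if_pos hab]
  have hprod := Matrix.prod_ofFn_apply_of_eq_add γ hband hsub hij
  exact ⟨hprod, hprod ▸ Finset.prod_ne_zero_iff.mpr fun k _ => hγ k _⟩
end

section
/- For a product L = L^{(1)}⋯L^{(p)} of N×N lower unit bidiagonal matrices with subdiagonal entries γ^{(i)}_k of L^{(i)} at position (k+1,k), the entries of L are given by l_{m,m-k} = Σ_{1 ≤ σ₁ < σ₂ < ⋯ < σ_k ≤ p} Π_{j=1}^{k} γ^{(σ_j)}_{m-j}, for k = 1,…,p. -/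
/-!
Induct on the number `p` of factors, splitting off the last one. Multiplying on the right by a
unit lower bidiagonal matrix with subdiagonal `c` gives `(M B) i j = M i j + M i (j + 1) * c j`.
Correspondingly, an increasing chain `σ₁ < ⋯ < σ_k` in `{1, …, p + 1}` either avoids `p + 1`,
or ends there and then contributes the factor `γ^{(p+1)}_{m-k}`. On the diagonal the second
term vanishes because the partial product is lower triangular.
-/

open Finset

namespace Fin

theorem strictMono_snoc_iff {α : Type*} [Preorder α] {n : ℕ} {f : Fin n → α} {x : α} :
    StrictMono (snoc f x : Fin (n + 1) → α) ↔ StrictMono f ∧ ∀ i, f i < x := by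
  rw [← insertNth_last', strictMono_insertNth_iff]
  simp [castSucc_lt_last]

theorem sum_filter_strictMono_succ {M : Type*} [AddCommMonoid M] {k p : ℕ}
    (f : (Fin (k + 1) → Fin (p + 1)) → M) :
    ∑ σ ∈ univ.filter (StrictMono : (Fin (k + 1) → Fin (p + 1)) → Prop), f σ =
      ∑ τ ∈ univ.filter (StrictMono : (Fin (k + 1) → Fin p) → Prop), f (castSucc ∘ τ) +
      ∑ τ ∈ univ.filter (StrictMono : (Fin k → Fin p) → Prop),
        f (snoc (castSucc ∘ τ) (last p)) := by
  rw [← sum_filter_not_add_sum_filter _ (fun σ => σ (last k) = last p)]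
  congr 1
  · refine (sum_bij (fun τ _ => castSucc ∘ τ) ?_ ?_ ?_ (fun _ _ => rfl)).symm
    · intro τ hτ
      simp only [mem_filter, mem_univ, true_and] at hτ ⊢
      exact ⟨strictMono_castSucc.comp hτ, (castSucc_lt_last _).ne⟩
    · intro τ₁ _ τ₂ _ h
      exact funext fun a => castSucc_injective _ (congrFun h a)
    · intro σ hσ
      simp only [mem_filter, mem_univ, true_and] at hσ
      obtain ⟨hmono, hlast⟩ := hσ
      have hne : ∀ a, σ a ≠ last p := fun a ha =>
        hlast (le_antisymm (le_last _) (ha ▸ hmono.monotone (le_last a)))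
      refine ⟨fun a => (σ a).castPred (hne a), ?_, funext fun a => castSucc_castPred _ _⟩
      simpa using strictMono_castPred_comp hne hmono
  · refine (sum_bij (fun τ _ => snoc (castSucc ∘ τ) (last p)) ?_ ?_ ?_ (fun _ _ => rfl)).symm
    · intro τ hτ
      simp only [mem_filter, mem_univ, true_and] at hτ ⊢
      exact ⟨strictMono_snoc_iff.2 ⟨strictMono_castSucc.comp hτ, fun _ => castSucc_lt_last _⟩,
        snoc_last _ _⟩
    · intro τ₁ _ τ₂ _ h
      funext a
      simpa using congrFun h a.castSucc
    · intro σ hσ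
      simp only [mem_filter, mem_univ, true_and] at hσ
      obtain ⟨hmono, hlast⟩ := hσ
      have hlt : ∀ a : Fin k, σ a.castSucc < last p := fun a =>
        hlast ▸ hmono (castSucc_lt_last a)
      refine ⟨fun a => (σ a.castSucc).castPred (hlt a).ne, ?_, ?_⟩
      · simpa using strictMono_castPred_comp (fun a => (hlt a).ne)
          (hmono.comp strictMono_castSucc)
      · conv_rhs => rw [← snoc_init_self σ, hlast]
        congr 1

end Fin

section

variable {R : Type*} [CommRing R]

def increasingChainSum {p : ℕ} (γ : Fin p → ℕ → R) (k m : ℕ) : R :=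
  ∑ σ ∈ univ.filter (StrictMono : (Fin k → Fin p) → Prop), ∏ a : Fin k, γ (σ a) (m - (a + 1))

@[simp]
theorem increasingChainSum_zero {p : ℕ} (γ : Fin p → ℕ → R) (m : ℕ) :
    increasingChainSum γ 0 m = 1 := by
  simp [increasingChainSum, Subsingleton.strictMono]

@[simp]
theorem increasingChainSum_of_fin_zero (γ : Fin 0 → ℕ → R) (k m : ℕ) :
    increasingChainSum γ (k + 1) m = 0 := by
  simp [increasingChainSum]

theorem increasingChainSum_succ {p : ℕ} (γ : Fin (p + 1) → ℕ → R) (k m : ℕ) :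
    increasingChainSum γ (k + 1) m =
      increasingChainSum (fun q => γ q.castSucc) (k + 1) m +
        increasingChainSum (fun q => γ q.castSucc) k m * γ (Fin.last p) (m - (k + 1)) := by
  rw [increasingChainSum, Fin.sum_filter_strictMono_succ, increasingChainSum, increasingChainSum,
    sum_mul]
  congr 1
  refine sum_congr rfl fun τ _ => ?_
  rw [Fin.prod_univ_castSucc]
  simp

def unitLowerBidiagonal (N : ℕ) (c : ℕ → R) : Matrix (Fin N) (Fin N) R :=
  Matrix.of fun i j => if (i : ℕ) = j then 1 else if (i : ℕ) = j + 1 then c j else 0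

theorem isLowerTriangular_unitLowerBidiagonal {N : ℕ} (c : ℕ → R) :
    (unitLowerBidiagonal N c).IsLowerTriangular := by
  intro i j hij
  have : (i : ℕ) < j := hij
  simp only [unitLowerBidiagonal, Matrix.of_apply]
  rw [if_neg (by omega), if_neg (by omega)]

theorem mul_unitLowerBidiagonal_apply_of_val_eq_succ {N : ℕ} (M : Matrix (Fin N) (Fin N) R)
    (c : ℕ → R) (i : Fin N) {j j' : Fin N} (hj : (j' : ℕ) = j + 1) :
    (M * unitLowerBidiagonal N c) i j = M i j + M i j' * c j := by
  have hne : j ≠ j' := fun h => by simp [h] at hj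
  rw [Matrix.mul_apply, sum_eq_add j j' hne]
  · simp [unitLowerBidiagonal, hj]
  · intro m _ hm
    simp only [unitLowerBidiagonal, Matrix.of_apply]
    rw [if_neg (fun h => hm.1 (Fin.ext h)), if_neg (fun h => hm.2 (Fin.ext (h.trans hj.symm))),
      mul_zero]
  all_goals simp

theorem Matrix.IsLowerTriangular.mul_unitLowerBidiagonal_apply_self {N : ℕ}
    {M : Matrix (Fin N) (Fin N) R} (hM : M.IsLowerTriangular) (c : ℕ → R) (i : Fin N) :
    (M * unitLowerBidiagonal N c) i i = M i i := by
  rw [Matrix.mul_apply, sum_eq_single i]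
  · simp [unitLowerBidiagonal]
  · intro m _ hm
    rcases lt_or_gt_of_ne hm with h | h
    · rw [isLowerTriangular_unitLowerBidiagonal c h, mul_zero]
    · rw [hM h, zero_mul]
  · simp

theorem isLowerTriangular_list_prod {N : ℕ} {l : List (Matrix (Fin N) (Fin N) R)}
    (hl : ∀ M ∈ l, M.IsLowerTriangular) : l.prod.IsLowerTriangular :=
  Matrix.mem_blockTriangularSubsemiring.1 <|
    Subsemiring.list_prod_mem _ fun M hM => Matrix.mem_blockTriangularSubsemiring.2 (hl M hM)

theorem list_prod_unitLowerBidiagonal_apply {N p : ℕ} (γ : Fin p → ℕ → R) (k : ℕ)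
    (i j : Fin N) (hij : (i : ℕ) = j + k) :
    (List.ofFn fun q => unitLowerBidiagonal N (γ q)).prod i j = increasingChainSum γ k i := by
  induction p generalizing k j with
  | zero =>
    cases k with
    | zero => simp [show i = j from Fin.ext hij]
    | succ k => simp [Matrix.one_apply_ne (show i ≠ j from fun h => by simp [h] at hij)]
  | succ p ih =>
    have hprod := isLowerTriangular_list_prod (l := List.ofFn fun q : Fin p =>
      unitLowerBidiagonal N (γ q.castSucc)) (by simp [isLowerTriangular_unitLowerBidiagonal])
    rw [List.ofFn_succ', List.prod_concat]
    cases k with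
    | zero =>
      obtain rfl : i = j := Fin.ext hij
      rw [hprod.mul_unitLowerBidiagonal_apply_self, ih _ 0 i rfl, increasingChainSum_zero,
        increasingChainSum_zero]
    | succ k =>
      let j' : Fin N := ⟨j + 1, by omega⟩
      rw [mul_unitLowerBidiagonal_apply_of_val_eq_succ _ _ _ (j' := j') rfl, ih _ _ j hij,
        ih _ k j' (by simp [j']; omega), increasingChainSum_succ,
        show (i : ℕ) - (k + 1) = j by omega]

end

/-- For a product `L = L⁽¹⁾⋯L⁽ᵖ⁾` of `N×N` lower unit bidiagonal
matrices with subdiagonal entries `γ⁽ⁱ⁾ₖ` of `L⁽ⁱ⁾` at position `(k+1,k)`, the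
entries of `L` are `l_{m,m-k} = Σ_{1≤σ₁<⋯<σ_k≤p} Π_{j=1}^{k} γ⁽^{σ_j}⁾_{m-j}`,
for `k = 1,…,p`. -/
theorem stmt4 {R : Type*} [CommRing R] {N p : ℕ}
    (γ : Fin p → ℕ → R)
    (L : Fin p → Matrix (Fin N) (Fin N) R)
    (hL : ∀ (k : Fin p) (i j : Fin N), L k i j =
      if (i : ℕ) = (j : ℕ) then 1
      else if (i : ℕ) = (j : ℕ) + 1 then γ k (j : ℕ) else 0) :
    ∀ (k : ℕ), 1 ≤ k → k ≤ p → ∀ i j : Fin N, (i : ℕ) = (j : ℕ) + k →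
      (List.ofFn L).prod i j =
        ∑ σ ∈ Finset.univ.filter
            (fun σ : Fin k → Fin p => ∀ a b : Fin k, a < b → σ a < σ b),
          ∏ jj : Fin k, γ (σ jj) ((i : ℕ) - ((jj : ℕ) + 1)) := by
  intro k _ _ i j hij
  have hL' : L = fun q => unitLowerBidiagonal N (γ q) := funext fun q => Matrix.ext (hL q)
  rw [hL', list_prod_unitLowerBidiagonal_apply γ k i j hij, increasingChainSum]
  exact sum_congr (filter_congr fun σ _ => ⟨fun h a b => @h a b, fun h _ _ => h _ _⟩)
    fun _ _ => rfl
end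

section
/- For every integer p ≥ 2, Σ_{m=1}^{p-1} Σ_{s=1}^{m} ( C(p, m-s+1)·(m-s) + 1 ) = (p/2)·(p + 1 + (p-3)·2^{p-1}). -/
/-!
Putting `k = m - s + 1`, the pair `(m, s)` contributes `C(p, k) (k - 1) + 1`, and each
`k ∈ [1, p - 1]` arises from exactly `p - k` pairs. The weighted sum is then evaluated with the
absorption identity `(p - k) C(p, k) = p C(p - 1, k)` and `∑ k C(n, k) = n 2^(n-1)`.
-/

open Finset

theorem sum_Icc_sum_Icc_sub_add_one {M : Type*} [AddCommMonoid M] (f : ℕ → M) (n : ℕ) :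
    ∑ m ∈ Icc 1 n, ∑ s ∈ Icc 1 m, f (m - s + 1) = ∑ k ∈ Icc 1 n, (n + 1 - k) • f k := by
  have reflect (m : ℕ) : ∑ s ∈ Icc 1 m, f (m - s + 1) = ∑ k ∈ Icc 1 m, f k := by
    refine sum_nbij' (m + 1 - ·) (m + 1 - ·) ?_ ?_ ?_ ?_ ?_ <;> intro s hs <;>
      simp only [mem_Icc] at hs ⊢ <;> first | omega | congr 1; omega
  simp_rw [reflect]
  rw [sum_comm' (t' := Icc 1 n) (s' := fun k ↦ Icc k n) (by intro m k; simp only [mem_Icc]; omega)]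
  simp only [sum_const, Nat.card_Icc]

theorem two_mul_sum_range_mul_choose (n : ℕ) :
    2 * ∑ k ∈ range (n + 1), k * n.choose k = n * 2 ^ n := by
  rcases n with _ | n
  · simp
  · rw [Nat.sum_range_mul_choose, Nat.add_sub_cancel]; ring

theorem two_mul_sum_range_sub (n : ℕ) :
    2 * ∑ k ∈ range (n + 1), (n + 1 - k) = (n + 1) * (n + 2) := by
  induction n with
  | zero => simp
  | succ n ih =>
    rw [sum_range_succ']
    simp only [Nat.add_sub_add_right, Nat.sub_zero, mul_add, ih]
    ring

theorem two_mul_sum_range_nsmul_choose {R : Type*} [CommRing R] (n : ℕ) :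
    2 * ∑ k ∈ range (n + 1), (n + 1 - k) • ((n + 1).choose k * ((k : R) - 1) + 1) =
      (n + 1) * (n + 2 + (n - 2) * 2 ^ n) := by
  have absorb (k : ℕ) : (n + 1 - k) • ((n + 1).choose k * ((k : R) - 1) + 1) =
      ((n : R) + 1) * (k * n.choose k) - (n + 1) * n.choose k + (n + 1 - k : ℕ) := by
    have h : (((n + 1).choose k * (n + 1 - k) : ℕ) : R) = n.choose k * (n + 1) := by
      rw [← Nat.choose_mul_succ_eq]; push_cast; ring
    push_cast at h
    rw [nsmul_eq_mul]
    linear_combination ((k : R) - 1) * h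
  have h1 := congrArg (Nat.cast : ℕ → R) (two_mul_sum_range_mul_choose n)
  have h2 := congrArg (Nat.cast : ℕ → R) (Nat.sum_range_choose n)
  have h3 := congrArg (Nat.cast : ℕ → R) (two_mul_sum_range_sub n)
  push_cast at h1 h2 h3
  simp only [absorb, sum_add_distrib, sum_sub_distrib, ← mul_sum]
  linear_combination (n + 1 : R) * h1 - 2 * (n + 1 : R) * h2 + h3

theorem stmt11_general (p : ℕ) :
    ∑ m ∈ Finset.Icc 1 (p - 1), ∑ s ∈ Finset.Icc 1 m,
        ((p.choose (m - s + 1) : ℚ) * ((m : ℚ) - (s : ℚ)) + 1) =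
      ((p : ℚ) / 2) * ((p : ℚ) + 1 + ((p : ℚ) - 3) * 2 ^ (p - 1)) := by
  rcases p with _ | n
  · simp
  set g : ℕ → ℚ := fun k ↦ (n + 1).choose k * ((k : ℚ) - 1) + 1
  have summand (m s : ℕ) (hs : s ∈ Icc 1 m) :
      ((n + 1).choose (m - s + 1) : ℚ) * ((m : ℚ) - s) + 1 = g (m - s + 1) := by
    rw [mem_Icc] at hs
    simp only [g, Nat.cast_add_one, Nat.cast_sub hs.2]
    ring
  have boundary : ∀ k ∈ range (n + 1), k ∉ Icc 1 n → (n + 1 - k) • g k = 0 := by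
    intro k hk hk'
    obtain rfl : k = 0 := by simp only [mem_range, mem_Icc] at hk hk'; omega
    simp [g]
  calc _ = ∑ k ∈ Icc 1 n, (n + 1 - k) • g k := by
        simp only [Nat.add_sub_cancel]
        rw [← sum_Icc_sum_Icc_sub_add_one]
        exact sum_congr rfl fun m _ ↦ sum_congr rfl (summand m)
    _ = ∑ k ∈ range (n + 1), (n + 1 - k) • g k :=
        sum_subset (fun k hk ↦ by simp only [mem_range, mem_Icc] at hk ⊢; omega) boundary
    _ = _ := by
        have key := two_mul_sum_range_nsmul_choose (R := ℚ) n
        rw [Nat.add_sub_cancel]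
        push_cast
        linear_combination key / 2

/-- For every integer `p ≥ 2`,
`Σ_{m=1}^{p-1} Σ_{s=1}^{m} (C(p, m-s+1)·(m-s) + 1) = (p/2)·(p+1+(p-3)·2^{p-1})`. -/
theorem stmt11 (p : ℕ) (hp : 2 ≤ p) :
    ∑ m ∈ Finset.Icc 1 (p - 1), ∑ s ∈ Finset.Icc 1 m,
        ((p.choose (m - s + 1) : ℚ) * ((m : ℚ) - (s : ℚ)) + 1) =
      ((p : ℚ) / 2) * ((p : ℚ) + 1 + ((p : ℚ) - 3) * 2 ^ (p - 1)) :=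
  stmt11_general p
end

section
/- Let L = L^{(1)}⋯L^{(p)} be a product of N×N lower unit bidiagonal matrices with subdiagonal entries γ_{(m-1)p+m+i} (row m of L^{(i)}), all nonzero. Then for each m and each s = 1,…,p, setting Γ_s = Π_{j=2}^{p-s+1} γ_{(m-j)p+m+s}, the entry γ_{(m-1)p+m+s} satisfies γ_{(m-1)p+m+s} = ( l_{m,m-p+s-1} - Σ_{1≤σ₁<⋯<σ_{p-s+1}≤p, σ₁≠s} Π_{j=1}^{p-s+1} γ_{(m-j)p+σ_j+m-j+1} ) / Γ_s. -/
/-!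
Expanding the product, the entry `l_{m,m-k}` of `L⁽¹⁾ ⋯ L⁽ᵖ⁾` is a sum over the strictly
increasing `σ : Fin k → Fin p` recording in which factor each of the `k` descents from row `m`
is made; the weight of `σ` is the product of the subdiagonal entries used. For
`k = p - s + 1` the only `σ` with `σ 0 = s - 1` is `σ j = s - 1 + j`, whose weight is
`γ_{(m-1)p+m+s} Γ_s`; all other `σ` are the ones subtracted in the formula, and `Γ_s ≠ 0`.
-/

open Finset

section StrictMonoTuples

variable {M : Type*} [AddCommMonoid M] {k n : ℕ}

theorem Fin.sum_strictMono_apply_zero_eq_zero (f : (Fin (k + 1) → Fin (n + 1)) → M) :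
    ∑ σ with StrictMono σ ∧ σ 0 = 0, f σ =
      ∑ τ : Fin k → Fin n with StrictMono τ, f (Fin.cons 0 (Fin.succ ∘ τ)) := by
  symm
  refine sum_bij (fun τ _ => Fin.cons 0 (Fin.succ ∘ τ)) ?_ ?_ ?_ fun _ _ => rfl
  · intro τ hτ
    simp only [mem_filter_univ] at hτ ⊢
    exact ⟨Fin.strictMono_cons.2 ⟨fun j => Fin.succ_pos _, Fin.strictMono_succ.comp hτ⟩,
      Fin.cons_zero _ _⟩
  · intro τ _ τ' _ h
    funext j
    exact Fin.succ_injective _ (congrFun h j.succ)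
  · intro σ hσ
    simp only [mem_filter_univ] at hσ
    obtain ⟨hmono, h0⟩ := hσ
    have hne (j : Fin k) : σ j.succ ≠ 0 := (h0 ▸ hmono j.succ_pos).ne'
    refine ⟨fun j => (σ j.succ).pred (hne j), ?_, ?_⟩
    · simp only [mem_filter_univ]
      intro a b hab
      simpa [Fin.pred_lt_pred_iff] using hmono (Fin.succ_lt_succ_iff.2 hab)
    · funext j
      cases j using Fin.cases <;> simp [h0]

theorem Fin.sum_strictMono_apply_zero_ne_zero (f : (Fin (k + 1) → Fin (n + 1)) → M) :
    ∑ σ with StrictMono σ ∧ σ 0 ≠ 0, f σ =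
      ∑ τ : Fin (k + 1) → Fin n with StrictMono τ, f (Fin.succ ∘ τ) := by
  symm
  refine sum_bij (fun τ _ => Fin.succ ∘ τ) ?_ ?_ ?_ fun _ _ => rfl
  · intro τ hτ
    simp only [mem_filter_univ] at hτ ⊢
    exact ⟨Fin.strictMono_succ.comp hτ, Fin.succ_ne_zero _⟩
  · intro τ _ τ' _ h
    funext j
    exact Fin.succ_injective _ (congrFun h j)
  · intro σ hσ
    simp only [mem_filter_univ] at hσ
    obtain ⟨hmono, h0⟩ := hσ
    have hne (j : Fin (k + 1)) : σ j ≠ 0 :=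
      ((Fin.pos_iff_ne_zero.2 h0).trans_le (hmono.monotone j.zero_le)).ne'
    refine ⟨fun j => (σ j).pred (hne j), ?_, ?_⟩
    · simp only [mem_filter_univ]
      intro a b hab
      simpa [Fin.pred_lt_pred_iff] using hmono hab
    · funext j
      simp

theorem Fin.val_eq_add_of_strictMono {a : ℕ} (hn : a + k + 1 = n)
    {σ : Fin (k + 1) → Fin n} (hσ : StrictMono σ) (h0 : (σ 0 : ℕ) = a) (j : Fin (k + 1)) :
    (σ j : ℕ) = a + j := by
  subst hn
  have hge (i : Fin (k + 1)) : a ≤ σ i := h0.symm.trans_le (Fin.le_def.1 (hσ.monotone i.zero_le))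
  -- `σ - a` is a strictly monotone self-map of `Fin (k + 1)`, hence the identity.
  let τ : Fin (k + 1) → Fin (k + 1) := fun i => ⟨σ i - a, by omega⟩
  have hτ : StrictMono τ := fun i i' hii' => by
    have := hσ hii'
    have := hge i
    simp only [τ, Fin.lt_def] at this ⊢
    omega
  have hj := congrArg Fin.val (congrFun hτ.eq_id j)
  have := hge j
  simp only [τ, id] at hj
  omega

theorem Fin.filter_strictMono_val_zero_eq_singleton {a : ℕ} (hn : a + k + 1 = n) :
    ({σ : Fin (k + 1) → Fin n | StrictMono σ ∧ (σ 0 : ℕ) = a} : Finset _) =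
      {fun j => ⟨a + j, by omega⟩} := by
  ext σ
  simp only [mem_filter_univ, mem_singleton]
  refine ⟨fun ⟨hσ, h0⟩ => funext fun j => Fin.ext (Fin.val_eq_add_of_strictMono hn hσ h0 j),
    ?_⟩
  rintro rfl
  exact ⟨fun i j hij => Fin.mk_lt_mk.2 (Nat.add_lt_add_left hij a), rfl⟩

theorem Fin.sum_strictMono_eq_add_sum_val_zero_ne {a : ℕ} (hn : a + k + 1 = n)
    (f : (Fin (k + 1) → Fin n) → M) :
    ∑ σ with StrictMono σ, f σ =
      f (fun j => ⟨a + j, by omega⟩) + ∑ σ with StrictMono σ ∧ ((σ 0 : Fin n) : ℕ) ≠ a, f σ := by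
  rw [← sum_filter_add_sum_filter_not _ (fun σ => (σ 0 : ℕ) = a), filter_filter,
    filter_filter, Fin.filter_strictMono_val_zero_eq_singleton hn, sum_singleton]

end StrictMonoTuples

theorem Finset.prod_fin_succ_eq_mul_prod_Icc {M : Type*} [CommMonoid M] (f : ℕ → M) {k : ℕ} :
    ∏ j : Fin (k + 1), f (j + 1) = f 1 * ∏ j ∈ Icc 2 (k + 1), f j := by
  rw [Fin.prod_univ_eq_prod_range (fun j => f (j + 1)), prod_range_succ',
    ← Ico_add_one_right_eq_Icc, prod_Ico_eq_prod_range, mul_comm]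
  simp only [zero_add, add_tsub_cancel_right, add_comm 2, add_assoc, one_add_one_eq_two]

section PathSum

variable {R : Type*} [CommSemiring R]

/-- In the product `A 0 * ⋯ * A (n - 1)` of lower unit bidiagonal matrices, `A i` having
entry `w i c` at `(c + 1, c)`, the `j`-th of `k` descents from row `m` is made in the factor
`σ j` and picks up `w (σ j) (m - (j + 1))`. -/
def monotonePathSum {n : ℕ} (w : Fin n → ℕ → R) (m k : ℕ) : R :=
  ∑ σ : Fin k → Fin n with StrictMono σ, ∏ j, w (σ j) (m - (j + 1))

theorem monotonePathSum_zero {n : ℕ} (w : Fin n → ℕ → R) (m : ℕ) :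
    monotonePathSum w m 0 = 1 := by
  simp [monotonePathSum, Subsingleton.strictMono]

theorem monotonePathSum_fin_zero (w : Fin 0 → ℕ → R) (m k : ℕ) :
    monotonePathSum w m (k + 1) = 0 := by
  simp [monotonePathSum]

theorem monotonePathSum_succ {n : ℕ} (w : Fin (n + 1) → ℕ → R) (m k : ℕ) :
    monotonePathSum w (m + 1) (k + 1) =
      w 0 m * monotonePathSum (fun i => w i.succ) m k +
        monotonePathSum (fun i => w i.succ) (m + 1) (k + 1) := by
  rw [monotonePathSum, ← sum_filter_add_sum_filter_not _ (fun σ => σ 0 = 0),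
    filter_filter, filter_filter, Fin.sum_strictMono_apply_zero_eq_zero,
    Fin.sum_strictMono_apply_zero_ne_zero, monotonePathSum, monotonePathSum, mul_sum]
  congr 1
  refine sum_congr rfl fun τ _ => ?_
  rw [Fin.prod_univ_succ]
  simp [Nat.add_sub_add_right]

end PathSum

section UnitBidiagonal

variable {R : Type*}

def unitBidiagonal [Zero R] [One R] (N : ℕ) (w : ℕ → R) : Matrix (Fin N) (Fin N) R :=
  Matrix.of fun r c => if (r : ℕ) = c then 1 else if (r : ℕ) = c + 1 then w c else 0

theorem unitBidiagonal_isLowerTriangular [Zero R] [One R] (N : ℕ) (w : ℕ → R) :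
    (unitBidiagonal N w).IsLowerTriangular := by
  intro r c hrc
  have : (r : ℕ) < c := hrc
  simp only [unitBidiagonal, Matrix.of_apply]
  rw [if_neg (by omega), if_neg (by omega)]

theorem unitBidiagonal_mul_apply_zero [NonAssocSemiring R] {N : ℕ} (w : ℕ → R)
    (P : Matrix (Fin N) (Fin N) R) (h : 0 < N) (c : Fin N) :
    (unitBidiagonal N w * P) ⟨0, h⟩ c = P ⟨0, h⟩ c := by
  rw [Matrix.mul_apply, Fintype.sum_eq_single ⟨0, h⟩]
  · simp [unitBidiagonal]
  · intro r hr
    have hr : (r : ℕ) ≠ 0 := fun h' => hr (Fin.ext h')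
    simp only [unitBidiagonal, Matrix.of_apply]
    rw [if_neg (by omega), if_neg (by omega), zero_mul]

theorem unitBidiagonal_mul_apply_succ [NonAssocSemiring R] {N : ℕ} (w : ℕ → R)
    (P : Matrix (Fin N) (Fin N) R) {r : ℕ} (h : r + 1 < N) (c : Fin N) :
    (unitBidiagonal N w * P) ⟨r + 1, h⟩ c = P ⟨r + 1, h⟩ c + w r * P ⟨r, by omega⟩ c := by
  rw [Matrix.mul_apply, Fintype.sum_eq_add ⟨r + 1, h⟩ ⟨r, by omega⟩ (by simp [Fin.ext_iff])]
  · simp [unitBidiagonal]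
  · rintro x ⟨h1, h2⟩
    have h1 : (x : ℕ) ≠ r + 1 := fun h' => h1 (Fin.ext h')
    have h2 : (x : ℕ) ≠ r := fun h' => h2 (Fin.ext h')
    simp only [unitBidiagonal, Matrix.of_apply]
    rw [if_neg (by omega), if_neg (by omega), zero_mul]

theorem list_prod_unitBidiagonal_isLowerTriangular [Semiring R] {N n : ℕ}
    (w : Fin n → ℕ → R) :
    (List.ofFn fun i => unitBidiagonal N (w i)).prod.IsLowerTriangular :=
  (Matrix.blockTriangularSubsemiring R OrderDual.toDual).list_prod_mem fun _ hA => by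
    obtain ⟨i, rfl⟩ := List.mem_ofFn.1 hA
    exact Matrix.mem_blockTriangularSubsemiring.2 (unitBidiagonal_isLowerTriangular N (w i))

theorem list_prod_unitBidiagonal_apply [CommSemiring R] {N n : ℕ} (w : Fin n → ℕ → R)
    {k : ℕ} (r c : Fin N) (h : (c : ℕ) + k = r) :
    (List.ofFn fun i => unitBidiagonal N (w i)).prod r c = monotonePathSum w r k := by
  induction n generalizing r c k with
  | zero =>
    rw [List.ofFn_zero, List.prod_nil]
    rcases k with _ | k
    · obtain rfl : c = r := Fin.ext h
      rw [Matrix.one_apply_eq, monotonePathSum_zero]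
    · rw [monotonePathSum_fin_zero]
      exact Matrix.one_apply_ne fun hrc => by subst hrc; omega
  | succ n ih =>
    rw [List.ofFn_succ, List.prod_cons]
    obtain ⟨_ | r, hr⟩ := r <;> dsimp only at h ⊢
    · obtain rfl : k = 0 := by omega
      rw [unitBidiagonal_mul_apply_zero, ih _ _ _ h, monotonePathSum_zero, monotonePathSum_zero]
    · rw [unitBidiagonal_mul_apply_succ]
      rcases k with _ | k
      · have hzero := list_prod_unitBidiagonal_isLowerTriangular (N := N) (fun i => w i.succ)
          (i := ⟨r, by omega⟩) (j := c) (by rw [OrderDual.toDual_lt_toDual, Fin.lt_def]; dsimp only; omega)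
        rw [hzero, mul_zero, add_zero, ih _ _ _ h, monotonePathSum_zero, monotonePathSum_zero]
      · rw [monotonePathSum_succ, ih _ _ _ h, ih (k := k) _ ⟨r, by omega⟩ c (by dsimp only; omega),
          add_comm]

end UnitBidiagonal

/-- Let `L = L⁽¹⁾⋯L⁽ᵖ⁾` be a product of `N×N` lower unit
bidiagonal matrices whose subdiagonal entry in row `m` of `L⁽ⁱ⁾` is
`γ_{(m-1)p+m+i}`, all nonzero.  Then for each `m` and each `s = 1,…,p`, setting
`Γ_s = Π_{j=2}^{p-s+1} γ_{(m-j)p+m+s}`, the entry `γ_{(m-1)p+m+s}` satisfies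
`γ_{(m-1)p+m+s} = (l_{m,m-p+s-1}
    - Σ_{1≤σ₁<⋯<σ_{p-s+1}≤p, σ₁≠s} Π_{j=1}^{p-s+1} γ_{(m-j)p+σ_j+m-j+1}) / Γ_s`. -/
theorem stmt14 {F : Type*} [Field F] {N p : ℕ}
    (γ : ℕ → F) (hγ : ∀ n, γ n ≠ 0)
    (Lk : Fin p → Matrix (Fin N) (Fin N) F)
    (hLk : ∀ (i : Fin p) (r c : Fin N), Lk i r c =
      if (r : ℕ) = (c : ℕ) then 1
      else if (r : ℕ) = (c : ℕ) + 1 then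
        γ ((c : ℕ) * p + ((c : ℕ) + 1) + ((i : ℕ) + 1))
      else 0)
    (m s : ℕ) (hs1 : 1 ≤ s) (hsp : s ≤ p)
    (hm : p - s + 1 ≤ m) (hmN : m < N) :
    γ ((m - 1) * p + m + s) =
      ((List.ofFn Lk).prod ⟨m, hmN⟩ ⟨m - (p - s + 1), by omega⟩ -
        ∑ σ ∈ Finset.univ.filter
            (fun σ : Fin (p - s + 1) → Fin p =>
              (∀ a b, a < b → σ a < σ b) ∧ ((σ ⟨0, by omega⟩ : ℕ) + 1 ≠ s)),
          ∏ j : Fin (p - s + 1),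
            γ ((m - ((j : ℕ) + 1)) * p + ((σ j : ℕ) + 1)
                + (m - ((j : ℕ) + 1)) + 1)) /
      ∏ j ∈ Finset.Icc 2 (p - s + 1), γ ((m - j) * p + m + s) := by
  have hΓ : ∏ j ∈ Icc 2 (p - s + 1), γ ((m - j) * p + m + s) ≠ 0 :=
    prod_ne_zero_iff.2 fun j _ => hγ _
  have hLk' : Lk = fun i : Fin p => unitBidiagonal N fun c => γ (c * p + (c + 1) + (i + 1)) :=
    funext fun i => Matrix.ext fun r c => hLk i r c
  have hentry : (List.ofFn Lk).prod ⟨m, hmN⟩ ⟨m - (p - s + 1), by omega⟩ =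
      ∑ σ : Fin (p - s + 1) → Fin p with StrictMono σ, ∏ j : Fin (p - s + 1),
        γ ((m - (j + 1)) * p + (σ j + 1) + (m - (j + 1)) + 1) := by
    rw [hLk', list_prod_unitBidiagonal_apply (k := p - s + 1) _ _ _ (by dsimp only; omega),
      monotonePathSum]
    exact sum_congr rfl fun σ _ => prod_congr rfl fun j _ => congrArg γ (by ring)
  have hrest : ({σ : Fin (p - s + 1) → Fin p |
        (∀ a b, a < b → σ a < σ b) ∧ (σ ⟨0, by omega⟩ : ℕ) + 1 ≠ s} : Finset _) =
      ({σ : Fin (p - s + 1) → Fin p | StrictMono σ ∧ (σ 0 : ℕ) ≠ s - 1} : Finset _) := by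
    ext σ
    rw [mem_filter, mem_filter, Fin.zero_eta]
    exact and_congr Iff.rfl (and_congr Iff.rfl (not_congr (by omega)))
  rw [eq_div_iff hΓ, hentry, Fin.sum_strictMono_eq_add_sum_val_zero_ne (a := s - 1) (by omega),
    hrest, add_sub_cancel_right, ← prod_fin_succ_eq_mul_prod_Icc fun j => γ ((m - j) * p + m + s)]
  -- the weight of `σ j = s - 1 + j` is `γ_{(m-1)p+m+s} Γ_s`
  exact prod_congr rfl fun j _ => congrArg γ (by have := j.isLt; dsimp only; omega)
end
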